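/- arXiv:2603.28170 — 2 statements merged into one kernel-verified Lean document; each statement's English description precedes it below -/
import Mathlib

section
/- For every n and every ω ∈ Ω_n = {0,1,2}^n, there exists k ≥ 0 such that Z^k(ω) = Z^{k+1}(ω); consequently the stabilization time T_n(ω) = min{k ≥ 0 : Z^k(ω) = Z^{k+1}(ω)} is finite, and the string Z^{T_n(ω)}(ω) is sorted in non-increasing order. -/
/-!
Every step of `Z` strictly increases the string lexicographically: at the first position that
`Z` changes, a swapped pair `ω_i < ω_{i+1}` puts the larger letter. The orbit of `ω` lives in a
finite set, so it reaches a fixed point. A fixed point swaps no pair, while an ascent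
`ω_i < ω_{i+1}` always triggers a swap, either at `i` or, through the priority rule for the
pattern `012`, at `i + 1`; so the fixed point is non-increasing.
-/

open MeasureTheory ProbabilityTheory Filter Topology

namespace TASEP

/-- Extension of a string `ω ∈ {0,1,2}ⁿ` to all integer indices (0-based), with the
boundary convention that out-of-range entries on the left are `2` and on the right are `0`
(so that the boundary inequalities in the update rule are automatically satisfied, and
no out-of-range pair is ever swapped). -/
def extStr (n : ℕ) (ω : Fin n → Fin 3) (i : ℤ) : Fin 3 :=
  if h : 0 ≤ i ∧ i < n then ω ⟨i.toNat, by omega⟩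
  else if i < 0 then 2 else 0

/-- The (1-based) `i`-th entry of the string `ω`. -/
def entry (n : ℕ) (ω : Fin n → Fin 3) (i : ℕ) : Fin 3 := extStr n ω ((i : ℤ) - 1)

/-- Whether the (0-based) pair of positions `(i, i+1)` is swapped by the three-type
evolution step: either the generic rule `ω_{i-1} ≥ ω_i < ω_{i+1} ≥ ω_{i+2}` (out-of-range
inequalities considered satisfied), or the priority rule: in the pattern `012` the pair
`12` swaps (into `021`). -/
def swapPair (n : ℕ) (ω : Fin n → Fin 3) (i : ℤ) : Bool :=
  decide ((extStr n ω i < extStr n ω (i+1) ∧ extStr n ω i ≤ extStr n ω (i-1) ∧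
      extStr n ω (i+2) ≤ extStr n ω (i+1))
    ∨ (extStr n ω (i-1) = 0 ∧ extStr n ω i = 1 ∧ extStr n ω (i+1) = 2))

/-- The three-type parallel evolution step `Z` on `{0,1,2}ⁿ`. -/
def Zstep (n : ℕ) (ω : Fin n → Fin 3) : Fin n → Fin 3 := fun j =>
  if swapPair n ω j then extStr n ω ((j : ℤ) + 1)
  else if swapPair n ω ((j : ℤ) - 1) then extStr n ω ((j : ℤ) - 1)
  else ω j

/-- Whether the (0-based) pair `(i, i+1)` forms the pattern `02` (two-type step). -/
def swapPair2 (n : ℕ) (ω : Fin n → Fin 3) (i : ℤ) : Bool :=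
  decide (extStr n ω i = 0 ∧ extStr n ω (i+1) = 2)

/-- The two-type parallel evolution step `Z⁽²⁾`, replacing every occurrence of the
substring `02` by `20` (strings over `{0,2}` are realized inside `{0,1,2}ⁿ`). -/
def Z2step (n : ℕ) (ω : Fin n → Fin 3) : Fin n → Fin 3 := fun j =>
  if swapPair2 n ω j then extStr n ω ((j : ℤ) + 1)
  else if swapPair2 n ω ((j : ℤ) - 1) then extStr n ω ((j : ℤ) - 1)
  else ω j

/-- Stabilization time of `ω` under repeated application of the step `Zf`:
`min {k ≥ 0 : Zf^[k] ω = Zf^[k+1] ω}` (`sInf`, which is `0` if no such `k` exists). -/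
noncomputable def stabTime (n : ℕ) (Zf : (Fin n → Fin 3) → (Fin n → Fin 3))
    (ω : Fin n → Fin 3) : ℕ :=
  sInf {k | Zf^[k] ω = Zf^[k + 1] ω}

/-- The two-type stabilization time `T_n^{(2)}`. -/
noncomputable def T2 (n : ℕ) (ω : Fin n → Fin 3) : ℕ := stabTime n (Z2step n) ω

/-- The three-type stabilization time `T_n`. -/
noncomputable def T3 (n : ℕ) (ω : Fin n → Fin 3) : ℕ := stabTime n (Zstep n) ω

/-- The projection `Π₁`, replacing each `1` by `0`. -/
def proj1 (n : ℕ) (ω : Fin n → Fin 3) : Fin n → Fin 3 := fun j => if ω j = 2 then 2 else 0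

/-- The excess `E_n(ω) = T_n(ω) - T_n^{(2)}(Π₁ ω)` (as an integer). -/
noncomputable def excess (n : ℕ) (ω : Fin n → Fin 3) : ℤ :=
  (T3 n ω : ℤ) - (T2 n (proj1 n ω) : ℤ)

/-- The Bernoulli measure on one letter: `2` with probability `p`, `0` with
probability `1 - p`. -/
noncomputable def bern3 (p : ℝ) : Measure (Fin 3) :=
  ENNReal.ofReal (1 - p) • Measure.dirac 0 + ENNReal.ofReal p • Measure.dirac 2

/-- The Bernoulli product measure of parameter `p` on strings of length `n`
(supported on two-type strings `{0,2}ⁿ`). -/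
noncomputable def bernString (n : ℕ) (p : ℝ) : Measure (Fin n → Fin 3) :=
  Measure.pi fun _ => bern3 p

variable {n : ℕ} {ω : Fin n → Fin 3}

theorem extStr_natCast (j : Fin n) : extStr n ω j = ω j := by
  rw [extStr, dif_pos ⟨Int.natCast_nonneg _, by exact_mod_cast j.isLt⟩]
  exact congrArg ω (Fin.ext (by simp))

theorem nonneg_of_extStr_lt {i : ℤ} {a : Fin 3} (h : extStr n ω i < a) : 0 ≤ i := by
  by_contra hi
  rw [extStr, dif_neg (by omega), if_pos (by omega)] at h
  exact absurd h (not_lt.mpr (Fin.le_last a))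

theorem lt_of_lt_extStr {i : ℤ} {a : Fin 3} (h : a < extStr n ω i) : i < n := by
  by_contra hi
  rw [extStr, dif_neg (by omega), if_neg (by omega)] at h
  exact absurd h (Fin.not_lt_zero a)

theorem extStr_lt_of_swapPair {i : ℤ} (h : swapPair n ω i) :
    extStr n ω i < extStr n ω (i + 1) := by
  rw [swapPair, decide_eq_true_eq] at h
  rcases h with ⟨h, -⟩ | ⟨-, h1, h2⟩
  · exact h
  · rw [h1, h2]; decide

theorem exists_lt_Zstep_of_swapPair {i : ℤ} (h : swapPair n ω i) :
    ∃ j : Fin n, (j : ℤ) = i ∧ ω j < Zstep n ω j := by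
  have hlt := extStr_lt_of_swapPair h
  have hi₀ := nonneg_of_extStr_lt hlt
  have hi₁ := lt_of_lt_extStr hlt
  refine ⟨⟨i.toNat, by omega⟩, by simp [hi₀], ?_⟩
  have hj : ((⟨i.toNat, by omega⟩ : Fin n) : ℤ) = i := by simp [hi₀]
  rw [Zstep, hj, if_pos h, ← extStr_natCast (ω := ω), hj]
  exact hlt

theorem toLex_lt_Zstep (h : Zstep n ω ≠ ω) : toLex ω < toLex (Zstep n ω) := by
  obtain ⟨j, hj, hmin⟩ := WellFounded.has_min wellFounded_lt {j | Zstep n ω j ≠ ω j}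
    (Function.ne_iff.mp h)
  refine ⟨j, fun k hk => by_contra fun hne => hmin k (Ne.symm hne) hk, ?_⟩
  show ω j < Zstep n ω j
  by_cases hs : swapPair n ω j
  · obtain ⟨j', hj', hlt⟩ := exists_lt_Zstep_of_swapPair hs
    rwa [Fin.ext (by exact_mod_cast hj' : (j' : ℕ) = j)] at hlt
  · -- a swap at `j - 1` would already change position `j - 1`, contradicting minimality of `j`
    by_cases hs' : swapPair n ω ((j : ℤ) - 1)
    · obtain ⟨j', hj', hlt⟩ := exists_lt_Zstep_of_swapPair hs'
      exact absurd (show j' < j by omega) (hmin j' hlt.ne')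
    · exact absurd (by rw [Zstep, if_neg hs, if_neg hs']) hj

theorem exists_iterate_Zstep_eq (ω : Fin n → Fin 3) :
    ∃ k : ℕ, (Zstep n)^[k] ω = (Zstep n)^[k + 1] ω := by
  by_contra! hne
  have hmono : StrictMono fun k => toLex ((Zstep n)^[k] ω) := strictMono_nat_of_lt_succ
    fun k => by
      have hk := hne k
      rw [Function.iterate_succ_apply'] at hk ⊢
      exact toLex_lt_Zstep (Ne.symm hk)
  exact not_injective_infinite_finite _ hmono.injective

theorem swapPair_or_swapPair_add_one {i : ℤ} (h : extStr n ω i < extStr n ω (i + 1)) :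
    swapPair n ω i ∨ swapPair n ω (i + 1) := by
  simp only [swapPair, decide_eq_true_eq, add_sub_cancel_right, add_assoc, one_add_one_eq_two]
  revert h
  generalize extStr n ω (i - 1) = a, extStr n ω i = b, extStr n ω (i + 1) = c,
    extStr n ω (i + 2) = d, extStr n ω (i + (1 + 2)) = e
  revert a b c d e
  decide

theorem antitone_extStr_of_Zstep_eq (h : Zstep n ω = ω) : Antitone (extStr n ω) := by
  have hno : ∀ i, swapPair n ω i = false := fun i => by
    by_contra hs
    obtain ⟨j, -, hlt⟩ := exists_lt_Zstep_of_swapPair (Bool.not_eq_false _ ▸ hs)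
    exact hlt.ne' (congrFun h j)
  refine antitone_int_of_succ_le fun i => not_lt.mp fun hlt => ?_
  rcases swapPair_or_swapPair_add_one hlt with hs | hs <;> simp [hno] at hs

/-- For every `n` and every `ω ∈ {0,1,2}ⁿ`, some iterate of `Z` is a
fixed point of `Z` (so the stabilization time `T_n(ω) = min{k : Z^[k] ω = Z^[k+1] ω}` is
well defined as a minimum over a nonempty set), and the string reached at time `T_n(ω)`
is sorted in non-increasing order. -/
theorem stabilizes_and_sorted (n : ℕ) (ω : Fin n → Fin 3) :
    (∃ k : ℕ, (Zstep n)^[k] ω = (Zstep n)^[k + 1] ω) ∧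
      ∀ i j : Fin n, i ≤ j → (Zstep n)^[T3 n ω] ω j ≤ (Zstep n)^[T3 n ω] ω i := by
  have hfix : Zstep n ((Zstep n)^[T3 n ω] ω) = (Zstep n)^[T3 n ω] ω :=
    (Function.iterate_succ_apply' _ _ _).symm.trans (Nat.sInf_mem (exists_iterate_Zstep_eq ω)).symm
  refine ⟨exists_iterate_Zstep_eq ω, fun i j hij => ?_⟩
  simpa only [extStr_natCast] using antitone_extStr_of_Zstep_eq hfix (by exact_mod_cast hij :
    (i : ℤ) ≤ j)

end TASEP
end

section
/- For any string ω ∈ {0,1,2}^n containing exactly one entry equal to 1, if the excess satisfies E_n(ω) > 1 then U(ω) > n − R(ω), where U(ω) is the position of the 1 and R(ω) is the length of the maximal suffix of 0s of Π_1ω. Equivalently, if U(ω) ≤ n − R(ω) then E_n(ω) ≤ 1. -/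
open MeasureTheory ProbabilityTheory Filter Topology

namespace TASEP

/-- The (1-based) position `U(ω)` of the (unique) `1` in `ω`. -/
noncomputable def Upos (n : ℕ) (ω : Fin n → Fin 3) : ℕ :=
  sInf {i : ℕ | entry n ω i = 1}

/-- The length `L(ω)` of the maximal prefix of `2`s of `Π₁ ω`. -/
noncomputable def Llen (n : ℕ) (ω : Fin n → Fin 3) : ℕ :=
  sSup {k : ℕ | k ≤ n ∧ ∀ i, 1 ≤ i → i ≤ k → entry n (proj1 n ω) i = 2}

/-- The length `R(ω)` of the maximal suffix of `0`s of `Π₁ ω`. -/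
noncomputable def Rlen (n : ℕ) (ω : Fin n → Fin 3) : ℕ :=
  sSup {k : ℕ | k ≤ n ∧ ∀ i, n - k + 1 ≤ i → i ≤ n → entry n (proj1 n ω) i = 0}

/-- The height function `S_k = ∑_{i=1}^k (1 - (Π₁ω)_i)` (1-based). -/
def heightS (n : ℕ) (ω : Fin n → Fin 3) (k : ℕ) : ℤ :=
  ∑ i ∈ Finset.Icc 1 k, (1 - ((entry n (proj1 n ω) i).val : ℤ))

/-- The switching position `K(ω)`: the rightmost `k ∈ {L+2, …, n−R−1}` such that
`S_l < S_k − 1` for all `l = L, …, k−2`, and `K(ω) = L+2` if no such `k` exists. -/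
noncomputable def Kpos (n : ℕ) (ω : Fin n → Fin 3) : ℕ :=
  sSup (insert (Llen n ω + 2)
    {k : ℕ | Llen n ω + 2 ≤ k ∧ k ≤ n - Rlen n ω - 1 ∧
      ∀ l, Llen n ω ≤ l → l ≤ k - 2 → heightS n ω l < heightS n ω k - 1})

/-- The position `M(ω)` of the leftmost maximum of the height on `{L+1, …, n−R−1}`. -/
noncomputable def Mpos (n : ℕ) (ω : Fin n → Fin 3) : ℕ :=
  sInf {j : ℕ | Llen n ω + 1 ≤ j ∧ j ≤ n - Rlen n ω - 1 ∧
    ∀ i, Llen n ω + 1 ≤ i → i ≤ n - Rlen n ω - 1 → heightS n ω i ≤ heightS n ω j}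


/-!
Under `Z` the single `1` moves by at most one site per step, and `Π₁ ∘ Z = Z⁽²⁾ ∘ Π₁`.
If some `2` lies to the right of the `1`, then at every later time either a `2` is still to
its right or one of the two sites just left of the `1` holds a `2`: the `1` moves left only
across a `0`, and a `1` that does not move sits right behind a `2`. At time `T⁽²⁾(Π₁ω)` the
projection is sorted, so no `2` is right of the `1`; the only possible move left is
`201 → 210`, after which everything is frozen, so `E ≤ 1`. If no `2` is right of the `1`,
the `1` lies in the final block of `0`s of `Π₁ω`, which is `U > n - R`.
-/

theorem exists_iterate_eq_iterate_succ {α β : Type*} [PartialOrder β] [WellFoundedGT β]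
    {f : α → α} {g : α → β} (hg : Function.Injective g) (hf : ∀ a, g a ≤ g (f a)) (a : α) :
    ∃ k, f^[k] a = f^[k + 1] a := by
  have hmono : Monotone fun k => g (f^[k] a) := monotone_nat_of_le_succ fun k => by
    simpa only [Function.iterate_succ_apply'] using hf (f^[k] a)
  obtain ⟨k, hk⟩ := WellFoundedGT.monotone_chain_condition ⟨_, hmono⟩
  exact ⟨k, hg (hk (k + 1) k.le_succ)⟩

section ParallelSwap

variable {α : Type*} (s : (ℤ → α) → ℤ → Bool) (x : ℤ → α)

/-- The site whose letter moves to site `i` when all pairs `(i, i + 1)` with `s x i` are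
swapped simultaneously. -/
def swapPartner (i : ℤ) : ℤ :=
  if s x i then i + 1 else if s x (i - 1) then i - 1 else i

def parSwap : ℤ → α := x ∘ swapPartner s x

variable {s x} {i : ℤ}

theorem parSwap_of_swap (h : s x i) : parSwap s x i = x (i + 1) := by
  simp [parSwap, swapPartner, h]

theorem parSwap_of_no_swap (h : s x i = false) (h' : s x (i - 1) = false) :
    parSwap s x i = x i := by
  simp [parSwap, swapPartner, h, h']

theorem swapPartner_involutive (hdisj : ∀ i, s x i → s x (i + 1) = false) :
    Function.Involutive (swapPartner s x) := by
  intro i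
  by_cases hi : s x i
  · simp [swapPartner, hi, hdisj i hi]
  · by_cases hi' : s x (i - 1) <;> simp [swapPartner, hi, hi']

theorem parSwap_eq_self_iff (hne : ∀ i, s x i → x i ≠ x (i + 1)) :
    parSwap s x = x ↔ ∀ i, s x i = false := by
  refine ⟨fun h i => ?_, fun h => funext fun i => parSwap_of_no_swap (h i) (h (i - 1))⟩
  by_contra hi
  have hi : s x i := by simpa using hi
  exact hne i hi (by rw [← parSwap_of_swap hi, h])

theorem parSwap_eq_two_or_pred {s : (ℤ → Fin 3) → ℤ → Bool} {x : ℤ → Fin 3}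
    (hlt : ∀ i, s x i → x i < x (i + 1)) {q : ℤ} (hq : x q = 2) :
    parSwap s x q = 2 ∨ parSwap s x (q - 1) = 2 := by
  have hq' : s x q = false := by
    by_contra h
    have := hlt q (by simpa using h)
    omega
  by_cases hs : s x (q - 1)
  · right
    rwa [parSwap_of_swap hs, sub_add_cancel]
  · left
    rwa [parSwap_of_no_swap hq' (by simpa using hs)]

end ParallelSwap

section Rules

variable {x : ℤ → Fin 3} {i : ℤ}

-- `swapPair n ω = zSwap (extStr n ω)` and `swapPair2 n ω = z2Swap (extStr n ω)` by `rfl`.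
def zSwap (x : ℤ → Fin 3) (i : ℤ) : Bool :=
  decide ((x i < x (i+1) ∧ x i ≤ x (i-1) ∧ x (i+2) ≤ x (i+1))
    ∨ (x (i-1) = 0 ∧ x i = 1 ∧ x (i+1) = 2))

def z2Swap (x : ℤ → Fin 3) (i : ℤ) : Bool :=
  decide (x i = 0 ∧ x (i+1) = 2)

theorem zSwap_lt (h : zSwap x i) : x i < x (i + 1) := by
  simp only [zSwap, decide_eq_true_eq] at h
  omega

theorem z2Swap_lt (h : z2Swap x i) : x i < x (i + 1) := by
  simp only [z2Swap, decide_eq_true_eq] at h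
  omega

theorem zSwap_disjoint (h : zSwap x i) : zSwap x (i + 1) = false := by
  simp only [zSwap, decide_eq_true_eq, decide_eq_false_iff_not] at h ⊢
  rw [show i + 1 + 1 = i + 2 by ring, show i + 1 - 1 = i by ring] at *
  omega

def proj1Letter (a : Fin 3) : Fin 3 := if a = 2 then 2 else 0

theorem proj1Letter_comp_parSwap_zSwap (x : ℤ → Fin 3) :
    proj1Letter ∘ parSwap zSwap x = parSwap z2Swap (proj1Letter ∘ x) := by
  have window : ∀ a b c d e : Fin 3,
      (if decide ((c < d ∧ c ≤ b ∧ e ≤ d) ∨ (b = 0 ∧ c = 1 ∧ d = 2)) then proj1Letter d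
        else if decide ((b < c ∧ b ≤ a ∧ d ≤ c) ∨ (a = 0 ∧ b = 1 ∧ c = 2)) then proj1Letter b
        else proj1Letter c) =
      if decide (proj1Letter c = 0 ∧ proj1Letter d = 2) then proj1Letter d
        else if decide (proj1Letter b = 0 ∧ proj1Letter c = 2) then proj1Letter b
        else proj1Letter c := by
    decide
  funext i
  simp only [Function.comp_apply, parSwap, swapPartner, zSwap, z2Swap, apply_ite x,
    apply_ite proj1Letter, show i - 1 - 1 = i - 2 by ring, show i - 1 + 1 = i by ring,
    show i - 1 + 2 = i + 1 by ring]
  exact window (x (i - 2)) (x (i - 1)) (x i) (x (i + 1)) (x (i + 2))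

end Rules

section Strings

variable {n : ℕ}

theorem exists_fin_coe_eq {i : ℤ} (h0 : 0 ≤ i) (h1 : i < n) : ∃ j : Fin n, (j : ℤ) = i :=
  ⟨⟨i.toNat, by omega⟩, by simp; omega⟩

theorem extStr_coe (ω : Fin n → Fin 3) (j : Fin n) : extStr n ω j = ω j := by
  simp [extStr]

theorem extStr_of_neg (ω : Fin n → Fin 3) {i : ℤ} (h : i < 0) : extStr n ω i = 2 := by
  simp [extStr, h, show ¬ 0 ≤ i by omega]

theorem extStr_of_le (ω : Fin n → Fin 3) {i : ℤ} (h : n ≤ i) : extStr n ω i = 0 := by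
  simp [extStr, show ¬ i < n by omega, show ¬ i < 0 by omega]

theorem extStr_injective : Function.Injective (extStr n) := fun σ τ h =>
  funext fun j => by rw [← extStr_coe σ, h, extStr_coe]

theorem extStr_eq_of_out (σ τ : Fin n → Fin 3) {i : ℤ} (h : i < 0 ∨ n ≤ i) :
    extStr n σ i = extStr n τ i := by
  rcases h with h | h
  · rw [extStr_of_neg σ h, extStr_of_neg τ h]
  · rw [extStr_of_le σ h, extStr_of_le τ h]

theorem swapPartner_extStr_of_out {s : (ℤ → Fin 3) → ℤ → Bool}
    (hlt : ∀ x i, s x i → x i < x (i + 1)) (ω : Fin n → Fin 3) {i : ℤ} (h : i < 0 ∨ n ≤ i) :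
    swapPartner s (extStr n ω) i = i := by
  have hs : ∀ k : ℤ, (k < 0 ∨ n ≤ k + 1) → s (extStr n ω) k = false := by
    intro k hk
    by_contra hsk
    have := hlt _ k (by simpa using hsk)
    rcases hk with hk | hk
    · rw [extStr_of_neg ω hk] at this
      omega
    · rw [extStr_of_le ω hk] at this
      omega
  simp [swapPartner, hs i (by omega), hs (i - 1) (by omega)]

theorem extStr_of_parSwap {s : (ℤ → Fin 3) → ℤ → Bool}
    (hlt : ∀ x i, s x i → x i < x (i + 1)) {F : (Fin n → Fin 3) → Fin n → Fin 3}
    (hF : ∀ ω j, F ω j = parSwap s (extStr n ω) j) (ω : Fin n → Fin 3) :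
    extStr n (F ω) = parSwap s (extStr n ω) := by
  funext i
  by_cases hi : 0 ≤ i ∧ i < n
  · obtain ⟨j, rfl⟩ := exists_fin_coe_eq hi.1 hi.2
    rw [extStr_coe, hF]
  · have hout : i < 0 ∨ n ≤ i := by omega
    rw [parSwap, Function.comp_apply, swapPartner_extStr_of_out hlt ω hout,
      extStr_eq_of_out _ ω hout]

theorem extStr_Zstep (ω : Fin n → Fin 3) : extStr n (Zstep n ω) = parSwap zSwap (extStr n ω) :=
  extStr_of_parSwap (fun _ _ => zSwap_lt) (fun ω j => by
    simp only [Zstep, parSwap, swapPartner, Function.comp_apply, apply_ite (extStr n ω),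
      extStr_coe]
    rfl) ω

theorem extStr_Z2step (ω : Fin n → Fin 3) :
    extStr n (Z2step n ω) = parSwap z2Swap (extStr n ω) :=
  extStr_of_parSwap (fun _ _ => z2Swap_lt) (fun ω j => by
    simp only [Z2step, parSwap, swapPartner, Function.comp_apply, apply_ite (extStr n ω),
      extStr_coe]
    rfl) ω

theorem extStr_proj1 (ω : Fin n → Fin 3) :
    extStr n (proj1 n ω) = proj1Letter ∘ extStr n ω := by
  funext i
  by_cases hi : 0 ≤ i ∧ i < n
  · obtain ⟨j, rfl⟩ := exists_fin_coe_eq hi.1 hi.2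
    simp only [extStr_coe, Function.comp_apply]
    rfl
  · rcases (by omega : i < 0 ∨ n ≤ i) with h | h
    · simp [extStr_of_neg _ h, proj1Letter]
    · simp [extStr_of_le _ h, proj1Letter]

theorem proj1_Zstep (ω : Fin n → Fin 3) : proj1 n (Zstep n ω) = Z2step n (proj1 n ω) :=
  extStr_injective <| by
    rw [extStr_Z2step, extStr_proj1, extStr_proj1, extStr_Zstep,
      proj1Letter_comp_parSwap_zSwap]

theorem toLex_le_toLex_Z2step (τ : Fin n → Fin 3) : toLex τ ≤ toLex (Z2step n τ) := by
  refine not_lt.mp fun hlex => ?_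
  obtain ⟨j, hpre, hlt⟩ : ∃ j, (∀ k < j, Z2step n τ k = τ k) ∧ Z2step n τ j < τ j := hlex
  have hZ (k : Fin n) : Z2step n τ k = parSwap z2Swap (extStr n τ) k := by
    rw [← extStr_coe (Z2step n τ), extStr_Z2step]
  have hτ (k : Fin n) : τ k = extStr n τ k := (extStr_coe τ k).symm
  rw [hZ, hτ] at hlt
  by_cases h1 : z2Swap (extStr n τ) j
  · rw [parSwap_of_swap h1] at hlt
    simp only [z2Swap, decide_eq_true_eq] at h1
    omega
  by_cases h2 : z2Swap (extStr n τ) (j - 1)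
  · -- a `2` stepping left onto `j` changes the earlier site `j - 1` as well
    have h2' := h2
    simp only [z2Swap, decide_eq_true_eq, sub_add_cancel] at h2'
    have hj0 : 0 ≤ (j : ℤ) - 1 := by
      by_contra hneg
      rw [extStr_of_neg τ (by omega)] at h2'
      omega
    obtain ⟨k, hk⟩ := exists_fin_coe_eq (n := n) hj0 (by omega)
    have := hpre k (by rw [Fin.lt_def]; omega)
    rw [hZ, hτ, hk, parSwap_of_swap h2, sub_add_cancel] at this
    omega
  · rw [parSwap_of_no_swap (by simpa using h1) (by simpa using h2)] at hlt
    exact lt_irrefl _ hlt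

theorem exists_Z2step_iterate_fixed (τ : Fin n → Fin 3) :
    ∃ k, (Z2step n)^[k] τ = (Z2step n)^[k + 1] τ :=
  exists_iterate_eq_iterate_succ toLex.injective toLex_le_toLex_Z2step τ

end Strings

section SingleOne

variable {x : ℤ → Fin 3} {u : ℤ}

def OnlyOneAt (x : ℤ → Fin 3) (u : ℤ) : Prop := ∀ i, x i = 1 ↔ i = u

theorem onlyOneAt_parSwap {s : (ℤ → Fin 3) → ℤ → Bool}
    (hdisj : ∀ i, s x i → s x (i + 1) = false) (h : OnlyOneAt x u) :
    OnlyOneAt (parSwap s x) (swapPartner s x u) := fun i =>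
  (h (swapPartner s x i)).trans (swapPartner_involutive hdisj).eq_iff

namespace OnlyOneAt

theorem pred_ne (h : OnlyOneAt x u) : x (u - 1) ≠ 1 := fun h' => by
  have := (h _).1 h'
  omega

theorem zSwap_iff (h : OnlyOneAt x u) : zSwap x u ↔ x (u + 1) = 2 := by
  have h1 := (h u).2 rfl
  have h0 := h.pred_ne
  simp only [zSwap, decide_eq_true_eq]
  omega

theorem zSwap_pred_iff (h : OnlyOneAt x u) :
    zSwap x (u - 1) ↔ x (u - 1) = 0 ∧ x (u + 1) ≠ 2 := by
  have h1 := (h u).2 rfl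
  have h0 := h.pred_ne
  simp only [zSwap, decide_eq_true_eq, sub_add_cancel, show u - 1 + 2 = u + 1 by ring]
  omega

end OnlyOneAt

def TwoRightOrNearLeft (x : ℤ → Fin 3) (u : ℤ) : Prop :=
  (∃ q, u < q ∧ x q = 2) ∨ x (u - 1) = 2 ∨ x (u - 2) = 2

theorem twoRightOrNearLeft_parSwap (h1 : OnlyOneAt x u) (h : TwoRightOrNearLeft x u) :
    TwoRightOrNearLeft (parSwap zSwap x) (swapPartner zSwap x u) := by
  have hstay {q : ℤ} (hq : x q = 2) := parSwap_eq_two_or_pred (fun _ => zSwap_lt) hq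
  unfold TwoRightOrNearLeft
  by_cases hR : zSwap x u
  · rw [swapPartner, if_pos hR, add_sub_cancel_right, parSwap_of_swap hR]
    exact Or.inr (Or.inl (h1.zSwap_iff.1 hR))
  by_cases hL : zSwap x (u - 1)
  · have hl0 := (h1.zSwap_pred_iff.1 hL).1
    rw [swapPartner, if_neg hR, if_pos hL]
    rcases h with ⟨q, hq, hq2⟩ | hl2 | hll2
    · rcases hstay hq2 with h' | h'
      · exact Or.inl ⟨q, by omega, h'⟩
      · exact Or.inl ⟨q - 1, by omega, h'⟩
    · rw [hl0] at hl2
      exact absurd hl2 (by decide)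
    · rw [show u - 1 - 1 = u - 2 by ring, show u - 1 - 2 = u - 2 - 1 by ring]
      exact Or.inr (hstay hll2)
  · -- a `1` that does not move is blocked by a `2` on its left
    have hl2 : x (u - 1) = 2 := by
      have := h1.pred_ne
      have := h1.zSwap_pred_iff.not.1 hL
      have := h1.zSwap_iff.not.1 hR
      omega
    rw [swapPartner, if_neg hR, if_neg hL, show u - 2 = u - 1 - 1 by ring]
    exact Or.inr (hstay hl2)

theorem twoRightOrNearLeft_iterate (h1 : OnlyOneAt x u) (h : TwoRightOrNearLeft x u) (k : ℕ) :
    ∃ v, OnlyOneAt ((parSwap zSwap)^[k] x) v ∧ TwoRightOrNearLeft ((parSwap zSwap)^[k] x) v := by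
  induction k with
  | zero => exact ⟨u, h1, h⟩
  | succ k ih =>
    obtain ⟨v, hv1, hv⟩ := ih
    rw [Function.iterate_succ_apply']
    exact ⟨_, onlyOneAt_parSwap (fun _ => zSwap_disjoint) hv1,
      twoRightOrNearLeft_parSwap hv1 hv⟩

theorem OnlyOneAt.eq_pred_of_zSwap (hsorted : ∀ i, z2Swap (proj1Letter ∘ x) i = false)
    (h1 : OnlyOneAt x u) {i : ℤ} (hi : zSwap x i) : i = u - 1 := by
  have hlt := zSwap_lt hi
  have : x (i + 1) = 1 := by
    by_contra hne
    have h2 : x (i + 1) = 2 := by omega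
    have h0 : x i ≠ 2 := by omega
    simpa [z2Swap, proj1Letter, h2, h0] using hsorted i
  have := (h1 _).1 this
  omega

theorem OnlyOneAt.ne_two_of_lt (hsorted : ∀ i, z2Swap (proj1Letter ∘ x) i = false)
    (h1 : OnlyOneAt x u) {q : ℤ} (hq : u < q) : x q ≠ 2 := by
  have hzero : ∀ q, u ≤ q → proj1Letter (x q) = 0 := by
    intro q hq
    induction q, hq using Int.leInduction with
    | base => simp [proj1Letter, (h1 u).2 rfl]
    | succ q _ ih =>
      have := hsorted q
      simp only [z2Swap, Function.comp_apply, ih, true_and, decide_eq_false_iff_not] at this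
      simp only [proj1Letter] at this ⊢
      split_ifs <;> simp_all
  intro h2
  simpa [proj1Letter, h2] using hzero q hq.le

theorem parSwap_zSwap_eq_self_of_onlyOneAt (hsorted : ∀ i, z2Swap (proj1Letter ∘ x) i = false)
    (h1 : OnlyOneAt x u) (hu : zSwap x (u - 1) = false) : parSwap zSwap x = x :=
  (parSwap_eq_self_iff fun _ h => (zSwap_lt h).ne).2 fun i => by
    by_contra hi
    exact absurd (h1.eq_pred_of_zSwap hsorted (by simpa using hi)) (by rintro rfl; simp_all)

theorem parSwap_zSwap_idem (hsorted : ∀ i, z2Swap (proj1Letter ∘ x) i = false)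
    (h1 : OnlyOneAt x u) (h : TwoRightOrNearLeft x u) :
    parSwap zSwap (parSwap zSwap x) = parSwap zSwap x := by
  by_cases hL : zSwap x (u - 1)
  · have hl0 := (h1.zSwap_pred_iff.1 hL).1
    have hll2 : x (u - 2) = 2 := by
      rcases h with ⟨q, hq, hq2⟩ | hl2 | hll2
      · exact absurd hq2 (h1.ne_two_of_lt hsorted hq)
      · rw [hl0] at hl2
        exact absurd hl2 (by decide)
      · exact hll2
    have hR : zSwap x u = false := by simpa using zSwap_disjoint hL
    have h1' : OnlyOneAt (parSwap zSwap x) (u - 1) := by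
      simpa [swapPartner, hR, hL] using onlyOneAt_parSwap (fun _ => zSwap_disjoint) h1
    have hsorted' : ∀ i, z2Swap (proj1Letter ∘ parSwap zSwap x) i = false := by
      rwa [proj1Letter_comp_parSwap_zSwap,
        (parSwap_eq_self_iff fun _ h => (z2Swap_lt h).ne).2 hsorted]
    have hnot {i : ℤ} (hi : i ≠ u - 1) : zSwap x i = false := by
      by_contra hs
      exact hi (h1.eq_pred_of_zSwap hsorted (by simpa using hs))
    have hl2' : parSwap zSwap x (u - 2) = 2 := by
      rwa [parSwap_of_no_swap (hnot (by omega)) (hnot (by omega))]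
    refine parSwap_zSwap_eq_self_of_onlyOneAt hsorted' h1' ?_
    by_contra hs
    have := zSwap_lt (x := parSwap zSwap x) (i := u - 1 - 1) (by simpa using hs)
    rw [show u - 1 - 1 = u - 2 by ring, hl2'] at this
    omega
  · have hfix := parSwap_zSwap_eq_self_of_onlyOneAt hsorted h1 (by simpa using hL)
    rw [hfix, hfix]

end SingleOne

section Times

variable {n : ℕ} {ω : Fin n → Fin 3}

theorem onlyOneAt_extStr {j : Fin n} (h : ∀ j', ω j' = 1 ↔ j' = j) :
    OnlyOneAt (extStr n ω) j := by
  intro i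
  by_cases hi : 0 ≤ i ∧ i < n
  · obtain ⟨j', rfl⟩ := exists_fin_coe_eq hi.1 hi.2
    rw [extStr_coe, h, Fin.ext_iff]
    omega
  · have : i ≠ j := by omega
    rcases (by omega : i < 0 ∨ n ≤ i) with hi | hi
    · simp [extStr_of_neg ω hi, this]
    · simp [extStr_of_le ω hi, this]

theorem T3_le_T2_add_one {u : ℤ} (h1 : OnlyOneAt (extStr n ω) u)
    (h2 : ∃ q, u < q ∧ extStr n ω q = 2) : T3 n ω ≤ T2 n (proj1 n ω) + 1 := by
  set t := T2 n (proj1 n ω)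
  have hZ (k : ℕ) : extStr n ((Zstep n)^[k] ω) = (parSwap zSwap)^[k] (extStr n ω) :=
    Function.Semiconj.iterate_right extStr_Zstep k ω
  have hfix : Z2step n ((Z2step n)^[t] (proj1 n ω)) = (Z2step n)^[t] (proj1 n ω) := by
    have : (Z2step n)^[t] (proj1 n ω) = (Z2step n)^[t + 1] (proj1 n ω) :=
      Nat.sInf_mem (exists_Z2step_iterate_fixed (proj1 n ω))
    rw [Function.iterate_succ_apply'] at this
    exact this.symm
  have hsorted : ∀ i, z2Swap (proj1Letter ∘ extStr n ((Zstep n)^[t] ω)) i = false := by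
    rw [← extStr_proj1, Function.Semiconj.iterate_right proj1_Zstep t ω]
    refine (parSwap_eq_self_iff fun _ h => (z2Swap_lt h).ne).1 ?_
    rw [← extStr_Z2step, hfix]
  obtain ⟨v, hv1, hv⟩ := twoRightOrNearLeft_iterate h1 (.inl h2) t
  rw [← hZ] at hv1 hv
  apply Nat.sInf_le
  show (Zstep n)^[t + 1] ω = (Zstep n)^[t + 1 + 1] ω
  apply extStr_injective
  rw [hZ, hZ, Function.iterate_succ_apply', Function.iterate_succ_apply',
    Function.iterate_succ_apply', ← hZ]
  exact (parSwap_zSwap_idem hsorted hv1 hv).symm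

theorem Upos_eq_of_onlyOneAt {j : Fin n} (h : OnlyOneAt (extStr n ω) j) :
    Upos n ω = j + 1 := by
  have : {i : ℕ | entry n ω i = 1} = {(j : ℕ) + 1} := by
    ext i
    simp only [entry, h _, Set.mem_ofPred_eq, Set.mem_singleton_iff]
    omega
  simp [Upos, this]

theorem sub_le_Rlen_of_ne_two {j : Fin n} (h : ∀ q : ℤ, j ≤ q → extStr n ω q ≠ 2) :
    n - j ≤ Rlen n ω := by
  refine le_csSup ⟨n, fun k hk => hk.1⟩ ⟨Nat.sub_le n j, fun i hi _ => ?_⟩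
  have := j.isLt
  simp [entry, extStr_proj1, proj1Letter, h ((i : ℤ) - 1) (by omega)]

end Times

/-- For any string `ω ∈ {0,1,2}ⁿ` containing exactly one `1`, if the
excess satisfies `E_n(ω) > 1` then `U(ω) > n − R(ω)`, where `U(ω)` is the position of the
`1` and `R(ω)` is the length of the maximal suffix of `0`s of `Π₁ ω`. -/
theorem excess_gt_one_implies_U_gt (n : ℕ) (ω : Fin n → Fin 3)
    (h1 : ∃! j : Fin n, ω j = 1) (hE : 1 < excess n ω) :
    n - Rlen n ω < Upos n ω := by
  obtain ⟨j, hj, huniq⟩ := h1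
  have hone : OnlyOneAt (extStr n ω) j :=
    onlyOneAt_extStr fun j' => ⟨huniq j', fun h => h ▸ hj⟩
  by_cases h2 : ∃ q : ℤ, j < q ∧ extStr n ω q = 2
  · have := T3_le_T2_add_one hone h2
    unfold excess at hE
    omega
  · push Not at h2
    have hR : n - j ≤ Rlen n ω := sub_le_Rlen_of_ne_two fun q hq => by
      rcases hq.eq_or_lt with rfl | hq
      · simp [(hone _).2 rfl]
      · exact h2 q hq
    rw [Upos_eq_of_onlyOneAt hone]
    omega

end TASEP
end
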